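/- arXiv:1211.0136 — 4 statements merged into one kernel-verified Lean document; each statement's English description precedes it below -/
import Mathlib

section
/- If T_max > α/μ_T, then the function N_crit(r) = μ_V·(μ_T - r + sqrt((μ_T - r)^2 + 4αr/T_max))/(2αγ) is strictly decreasing on (0, ∞). -/
open Real Set

theorem stmt2 (α γ μT μV Tmax : ℝ) (hα : 0 < α) (hγ : 0 < γ) (hμT : 0 < μT)
    (hμV : 0 < μV) (hTmax : 0 < Tmax) (hbig : α / μT < Tmax) (Ncrit : ℝ → ℝ)
    (hN : ∀ r, Ncrit r =
      μV * (μT - r + Real.sqrt ((μT - r) ^ 2 + 4 * α * r / Tmax)) / (2 * α * γ)) :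
    StrictAntiOn Ncrit (Set.Ioi (0 : ℝ)) := by
  intro a ha b hb hab
  simp only [Set.mem_Ioi] at ha hb
  set c := 4 * α / Tmax with hcdef
  have hc0 : 0 < c := by positivity
  have hclt : c < 4 * μT := by
    rw [hcdef, div_lt_iff₀ hTmax]
    rw [div_lt_iff₀ hμT] at hbig
    nlinarith
  have hQa : (0:ℝ) < (μT - a) ^ 2 + c * a := by positivity
  have hQb : (0:ℝ) ≤ (μT - b) ^ 2 + c * b := by positivity
  have key : c / 2 - μT + a < Real.sqrt ((μT - a) ^ 2 + c * a) := by
    rcases le_or_gt (c / 2 - μT + a) 0 with h | h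
    · exact lt_of_le_of_lt h (Real.sqrt_pos.mpr hQa)
    · refine (Real.lt_sqrt h.le).mpr ?_
      nlinarith
  have hsa := Real.sq_sqrt hQa.le
  have hs0 := Real.sqrt_pos.mpr hQa
  have hsb : Real.sqrt ((μT - b) ^ 2 + c * b)
      < Real.sqrt ((μT - a) ^ 2 + c * a) + (b - a) := by
    have hR : 0 < Real.sqrt ((μT - a) ^ 2 + c * a) + (b - a) := by linarith
    rw [Real.sqrt_lt' hR]
    nlinarith [mul_lt_mul_of_pos_left key (by linarith : (0:ℝ) < 2 * (b - a))]
  have hnum : μT - b + Real.sqrt ((μT - b) ^ 2 + c * b)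
      < μT - a + Real.sqrt ((μT - a) ^ 2 + c * a) := by linarith
  have hca : (μT - a) ^ 2 + 4 * α * a / Tmax = (μT - a) ^ 2 + c * a := by
    rw [hcdef]; ring
  have hcb : (μT - b) ^ 2 + 4 * α * b / Tmax = (μT - b) ^ 2 + c * b := by
    rw [hcdef]; ring
  rw [hN a, hN b, hca, hcb]
  have hden : 0 < 2 * α * γ := by positivity
  rw [div_lt_div_iff₀ hden hden]
  nlinarith [mul_lt_mul_of_pos_right (mul_lt_mul_of_pos_left hnum hμV) hden]
end

section
/- Suppose N > μ_V/(γ·T_0(r)), i.e. R_0 := γNT_0(r)/μ_V > 1. Then the infected equilibrium values V_i = αN/μ_V - μ_T/γ + (r/γ)(1 - μ_V/(γNT_max)) and I_i = (μ_V/(Nμ_I))·V_i are both strictly positive. -/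
open Real

set_option maxHeartbeats 1000000 in
theorem stmt6 (α γ μT μI μV Tmax N r : ℝ) (hα : 0 < α) (hγ : 0 < γ) (hμT : 0 < μT)
    (hμI : 0 < μI) (hμV : 0 < μV) (hTmax : 0 < Tmax) (hN : 0 < N) (hr : 0 < r)
    (hbig : α / μT < Tmax) (T0 Vi Ii : ℝ)
    (hT0 : T0 = Tmax * (r - μT + Real.sqrt ((r - μT) ^ 2 + 4 * α * r / Tmax)) / (2 * r))
    (hR0 : μV / (γ * T0) < N)
    (hVi : Vi = α * N / μV - μT / γ + r / γ * (1 - μV / (γ * N * Tmax)))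
    (hIi : Ii = μV / (N * μI) * Vi) :
    0 < Vi ∧ 0 < Ii := by
  obtain ⟨s, hsdef⟩ : ∃ s, s = Real.sqrt ((r - μT) ^ 2 + 4 * α * r / Tmax) := ⟨_, rfl⟩
  rw [← hsdef] at hT0
  have harg : (0:ℝ) ≤ (r - μT) ^ 2 + 4 * α * r / Tmax := by positivity
  have hs2 : s ^ 2 = (r - μT) ^ 2 + 4 * α * r / Tmax := by rw [hsdef]; exact Real.sq_sqrt harg
  have hs0 : 0 ≤ s := by rw [hsdef]; exact Real.sqrt_nonneg _
  have hpos : 0 < 4 * α * r / Tmax := by positivity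
  have hsgt : r - μT < s := by nlinarith
  have hsgt2 : μT - r < s := by nlinarith
  have hT0pos : 0 < T0 := by
    rw [hT0]
    apply div_pos (mul_pos hTmax (by linarith : (0:ℝ) < r - μT + s)) (by linarith)
  obtain ⟨t, htdef⟩ : ∃ t, t = μV / (γ * N) := ⟨_, rfl⟩
  have ht0 : 0 < t := by rw [htdef]; positivity
  have htlt : t < T0 := by
    rw [div_lt_iff₀ (by positivity : 0 < γ * T0)] at hR0
    rw [htdef, div_lt_iff₀ (by positivity : 0 < γ * N)]
    nlinarith
  have hT0rel : 2 * r * T0 = Tmax * (r - μT + s) := by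
    rw [hT0]; field_simp
  have hs2' : s ^ 2 * Tmax = (r - μT) ^ 2 * Tmax + 4 * α * r := by
    have h := hs2
    field_simp at h
    nlinarith [h]
  have hkey : 0 < α - μT * t + r * t * (1 - t / Tmax) := by
    have h1 : 0 < T0 - t := by linarith
    have h2 : 0 < (s - (r - μT)) * Tmax + 2 * r * t := by nlinarith
    have hmul : 0 < (T0 - t) * ((s - (r - μT)) * Tmax + 2 * r * t) := mul_pos h1 h2
    rw [show α - μT * t + r * t * (1 - t / Tmax)
        = (α * Tmax - μT * t * Tmax + r * t * (Tmax - t)) / Tmax by field_simp]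
    apply div_pos _ hTmax
    nlinarith [hmul, hT0rel, hs2']
  have hViEq : Vi = N / μV * (α - μT * t + r * t * (1 - t / Tmax)) := by
    rw [hVi, htdef]; field_simp
  have hVipos : 0 < Vi := by
    rw [hViEq]; positivity
  exact ⟨hVipos, by rw [hIi]; positivity⟩
end

section
/- Define Φ(V) = (γN V/(2r))·(r - μ_T - γV + sqrt((r - μ_T - γV)^2 + 4αr/T_max))·T_max for V ≥ 0. Then V = 0 and V = V_i := αN/μ_V - μ_T/γ + (r/γ)(1 - μ_V/(γNT_max)) are the only real solutions of Φ(V) = μ_V·V, provided V_i ≠ 0. -/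
/-!
For `V ≠ 0`, dividing `Φ V = μV V` by `V` leaves `A + √(A² + k) = c` with `A = r - μT - γV`,
`k = 4αr/Tmax` and `c = 2rμV/(γN Tmax) > 0`. Squaring `√(A² + k) = c - A` turns this into the
linear equation `2cA = c² - k`, and the squaring loses nothing because its solution automatically
has `c - A = (c² + k)/(2c) ≥ 0`. Solving for `V` gives `Vi`.
-/

open Real

theorem add_sqrt_sq_add_eq_iff {a c k : ℝ} (hc : 0 < c) (hk : 0 ≤ k) :
    a + √(a ^ 2 + k) = c ↔ a = (c ^ 2 - k) / (2 * c) := by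
  rw [← eq_sub_iff_add_eq', eq_div_iff (by positivity)]
  have hpos : 0 ≤ a ^ 2 + k := by positivity
  constructor
  · intro h
    have hsq := sq_sqrt hpos
    rw [h] at hsq
    linear_combination -hsq
  · intro h
    have hca : 0 ≤ c - a := by nlinarith
    rw [sqrt_eq_iff_eq_sq hpos hca]
    linear_combination h

theorem stmt7_general (α γ μT μV Tmax N r : ℝ) (hα : 0 < α) (hγ : 0 < γ)
    (hμV : 0 < μV) (hTmax : 0 < Tmax) (hN : 0 < N) (hr : 0 < r)
    (Φ : ℝ → ℝ) (Vi : ℝ)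
    (hΦ : ∀ V, Φ V = γ * N * V / (2 * r) *
      (r - μT - γ * V + Real.sqrt ((r - μT - γ * V) ^ 2 + 4 * α * r / Tmax)) * Tmax)
    (hVi : Vi = α * N / μV - μT / γ + r / γ * (1 - μV / (γ * N * Tmax))) :
    ∀ V : ℝ, 0 ≤ V → (Φ V = μV * V ↔ V = 0 ∨ V = Vi) := by
  intro V _
  set c := 2 * r * μV / (γ * N * Tmax)
  set k := 4 * α * r / Tmax
  set A := r - μT - γ * V
  have hfactor : Φ V = V * (γ * N * Tmax / (2 * r) * (A + √(A ^ 2 + k))) := by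
    rw [hΦ]; ring
  have hrate : γ * N * Tmax / (2 * r) * (A + √(A ^ 2 + k)) = μV ↔ A + √(A ^ 2 + k) = c := by
    rw [div_mul_eq_mul_div, div_eq_iff (by positivity), eq_div_iff (by positivity)]
    constructor <;> intro h <;> linarith
  have hroot : (c ^ 2 - k) / (2 * c) = r - μT - γ * Vi := by
    simp only [c, k, hVi]; field_simp; ring
  rw [hfactor, mul_comm μV, mul_eq_mul_left_iff, hrate,
    add_sqrt_sq_add_eq_iff (by positivity) (by positivity), hroot, sub_right_inj,
    mul_right_inj' hγ.ne', or_comm]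

theorem stmt7 (α γ μT μV Tmax N r : ℝ) (hα : 0 < α) (hγ : 0 < γ) (hμT : 0 < μT)
    (hμV : 0 < μV) (hTmax : 0 < Tmax) (hN : 0 < N) (hr : 0 < r)
    (Φ : ℝ → ℝ) (Vi : ℝ)
    (hΦ : ∀ V, Φ V = γ * N * V / (2 * r) *
      (r - μT - γ * V + Real.sqrt ((r - μT - γ * V) ^ 2 + 4 * α * r / Tmax)) * Tmax)
    (hVi : Vi = α * N / μV - μT / γ + r / γ * (1 - μV / (γ * N * Tmax)))
    (hVine : Vi ≠ 0) :
    ∀ V : ℝ, 0 ≤ V → (Φ V = μV * V ↔ V = 0 ∨ V = Vi) :=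
  stmt7_general α γ μT μV Tmax N r hα hγ hμV hTmax hN hr Φ Vi hΦ hVi
end

section
/- Under the assumption μ_I > μ_T, the quantity δ = b² - 4ac (where a, b, c are the coefficients above) is strictly positive for every λ_k ≥ 0, since it factors as 16γ²μ_Iμ_V(μ_I + μ_V + d_Vλ_k) times a polynomial in λ_k whose coefficients are positive when μ_I > μ_T and T_max > 0. -/
/-!
With `x = d_V λ_k`, the discriminant factors as `16 γ² μ_I μ_V (x + μ_I + μ_V) · Q(x)`, and the
cofactor `Q` can be grouped so that, for `x ≥ 0` and `μ_T < μ_I`, each group is a sum of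
nonnegative terms and at least one of them is strictly positive.
-/

def hurwitzDiscrFactor (α μT μI μV Tmax x : ℝ) : ℝ :=
  α * Tmax * ((x ^ 2 - μI ^ 2) ^ 2 + μV * (4 * x ^ 3 + 6 * μV * x ^ 2 + 4 * μV ^ 2 * x + μV ^ 3) +
      4 * μI * μV * (x + μV) ^ 2 + μI ^ 2 * μV ^ 2) +
    4 * α * μI * μV * (x + μI + μV) * (α + Tmax * (μI - μT)) +
    μI ^ 2 * μV * Tmax ^ 2 * (x * (x + μI + μV) + μT * μV)

theorem hurwitzDiscrFactor_pos {α μT μI μV Tmax x : ℝ} (hα : 0 < α) (hμT : 0 < μT)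
    (hμI : 0 < μI) (hμV : 0 < μV) (hTmax : 0 < Tmax) (hμTI : μT < μI) (hx : 0 ≤ x) :
    0 < hurwitzDiscrFactor α μT μI μV Tmax x := by
  have : 0 < μI - μT := sub_pos.mpr hμTI
  unfold hurwitzDiscrFactor
  positivity

theorem discrim_eq_mul_hurwitzDiscrFactor (α γ μT μI μV Tmax dV lk : ℝ) :
    discrim (γ ^ 2 * μI * Tmax * (μI * μV * Tmax - 4 * α * dV * lk - 4 * α * (μI + μV)))
      (-2 * γ * μI * μV *
        ((dV ^ 2 * lk ^ 2 + 2 * (μI + μV) * dV * lk + μI ^ 2 + 3 * μI * μV + μV ^ 2) * Tmax -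
          4 * α * dV * lk - 4 * α * (μI + μV)))
      (μV * ((dV ^ 2 * lk ^ 2 - μI ^ 2) ^ 2 + 4 * μV * dV ^ 3 * lk ^ 3 +
        6 * μV * (μI + μV) * dV ^ 2 * lk ^ 2 +
        4 * μV * (μV ^ 2 + 3 * μI * μV + μI * (2 * μI - μT)) * dV * lk +
        2 * μI ^ 2 * μV * (3 * μI - 2 * μT) + 6 * μI * μV ^ 3 +
        μI * μV ^ 2 * (11 * μI - 4 * μT) + μV ^ 4)) =
      16 * γ ^ 2 * μI * μV * (dV * lk + μI + μV) *
        hurwitzDiscrFactor α μT μI μV Tmax (dV * lk) := by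
  unfold discrim hurwitzDiscrFactor
  ring

theorem stmt14 (α γ μT μI μV Tmax dV : ℝ)
    (hα : 0 < α) (hγ : 0 < γ) (hμT : 0 < μT) (hμI : 0 < μI) (hμV : 0 < μV)
    (hTmax : 0 < Tmax) (hdV : 0 < dV) (hbio : μT < μI) :
    ∀ lk : ℝ, 0 ≤ lk →
      ∀ a b c : ℝ,
        a = γ ^ 2 * μI * Tmax *
          (μI * μV * Tmax - 4 * α * dV * lk - 4 * α * (μI + μV)) →
        b = -2 * γ * μI * μV *
          ((dV ^ 2 * lk ^ 2 + 2 * (μI + μV) * dV * lk + μI ^ 2 + 3 * μI * μV + μV ^ 2) * Tmax -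
            4 * α * dV * lk - 4 * α * (μI + μV)) →
        c = μV * ((dV ^ 2 * lk ^ 2 - μI ^ 2) ^ 2 + 4 * μV * dV ^ 3 * lk ^ 3 +
          6 * μV * (μI + μV) * dV ^ 2 * lk ^ 2 +
          4 * μV * (μV ^ 2 + 3 * μI * μV + μI * (2 * μI - μT)) * dV * lk +
          2 * μI ^ 2 * μV * (3 * μI - 2 * μT) + 6 * μI * μV ^ 3 +
          μI * μV ^ 2 * (11 * μI - 4 * μT) + μV ^ 4) →
        0 < b ^ 2 - 4 * a * c := by
  intro lk hlk a b c ha hb hc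
  have hx : 0 ≤ dV * lk := mul_nonneg hdV.le hlk
  rw [← discrim, ha, hb, hc, discrim_eq_mul_hurwitzDiscrFactor]
  exact mul_pos (by positivity) (hurwitzDiscrFactor_pos hα hμT hμI hμV hTmax hbio hx)
end
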